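/- For ε > 0 define u_ε : ℝ³ → ℝ by u_ε(x) = 3^{1/4}·ε^{1/2}·(ε² + |x|²)^{−1/2}. Then u_ε is smooth and positive, it solves the equation −Δu_ε = u_ε⁵ pointwise on ℝ³ (Δ being the Laplacian, the sum of the second partial derivatives), and ∫_{ℝ³} |∇u_ε|² dx = ∫_{ℝ³} u_ε⁶ dx = 3^{3/2}·π²/4 for every ε > 0. -/

import Mathlib

open MeasureTheory Set Real Filter Topology


lemma aux_pos (a r : ℝ) (ha : 0 < a) : (0:ℝ) < a ^ 2 + r ^ 2 := by positivity

lemma aux_tendsto1 (a : ℝ) (ha : 0 < a) :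
    Tendsto (fun r : ℝ => r / (a ^ 2 + r ^ 2)) atTop (nhds 0) := by
  have h : ∀ᶠ r : ℝ in atTop, r / (a ^ 2 + r ^ 2) = (a ^ 2 / r + r)⁻¹ := by
    filter_upwards [eventually_gt_atTop 0] with r hr
    rw [inv_eq_one_div]
    rw [div_eq_div_iff (aux_pos a r ha).ne' (by positivity)]
    field_simp
  rw [tendsto_congr' h]
  exact Tendsto.inv_tendsto_atTop
    ((tendsto_const_nhds.div_atTop tendsto_id).add_atTop tendsto_id)

lemma aux_tendsto2 (a : ℝ) (ha : 0 < a) :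
    Tendsto (fun r : ℝ => r / (a ^ 2 + r ^ 2) ^ 2) atTop (nhds 0) := by
  have h2 : Tendsto (fun r : ℝ => (a ^ 2 + r ^ 2)) atTop atTop :=
    tendsto_atTop_add_const_left _ _ (tendsto_pow_atTop two_ne_zero)
  have := (aux_tendsto1 a ha).mul h2.inv_tendsto_atTop
  rw [mul_zero] at this
  refine this.congr (fun r => ?_)
  have hne := (aux_pos a r ha).ne'
  simp only [Pi.inv_apply]
  rw [← div_eq_mul_inv, div_div, ← sq]

lemma aux_arctan (a : ℝ) (ha : 0 < a) :
    Tendsto (fun r : ℝ => Real.arctan (r / a)) atTop (nhds (π / 2)) := by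
  have h : Tendsto (fun r : ℝ => r / a) atTop atTop := tendsto_id.atTop_div_const ha
  exact (Real.tendsto_arctan_atTop.mono_right nhdsWithin_le_nhds).comp h

lemma radial1 (a : ℝ) (ha : 0 < a) :
    ∫ r in Ioi (0:ℝ), r ^ 2 / (a ^ 2 + r ^ 2) ^ 3 = π / (16 * a ^ 3) := by
  set F : ℝ → ℝ := fun r => -(r / (4 * (a ^ 2 + r ^ 2) ^ 2)) + r / (8 * a ^ 2 * (a ^ 2 + r ^ 2))
      + Real.arctan (r / a) / (8 * a ^ 3) with hF
  have key : ∀ r : ℝ, HasDerivAt F (r ^ 2 / (a ^ 2 + r ^ 2) ^ 3) r := by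
    intro r
    have hne := (aux_pos a r ha).ne'
    have h0 : HasDerivAt (fun r : ℝ => a ^ 2 + r ^ 2) (2 * r) r := by
      simpa using (hasDerivAt_pow 2 r).const_add (a ^ 2)
    have h1 : HasDerivAt (fun r : ℝ => r / (4 * (a ^ 2 + r ^ 2) ^ 2))
        ((1 * (4 * (a ^ 2 + r ^ 2) ^ 2) - r * (4 * (2 * (a ^ 2 + r ^ 2) ^ 1 * (2 * r))))
          / (4 * (a ^ 2 + r ^ 2) ^ 2) ^ 2) r :=
      (hasDerivAt_id r).div ((h0.pow 2).const_mul 4) (by positivity)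
    have h2 : HasDerivAt (fun r : ℝ => r / (8 * a ^ 2 * (a ^ 2 + r ^ 2)))
        ((1 * (8 * a ^ 2 * (a ^ 2 + r ^ 2)) - r * (8 * a ^ 2 * (2 * r)))
          / (8 * a ^ 2 * (a ^ 2 + r ^ 2)) ^ 2) r :=
      (hasDerivAt_id r).div (h0.const_mul (8 * a ^ 2)) (by positivity)
    have h3 : HasDerivAt (fun r : ℝ => Real.arctan (r / a))
        (1 / (1 + (r / a) ^ 2) * (1 / a)) r := by
      have := (Real.hasDerivAt_arctan (r / a)).comp r ((hasDerivAt_id r).div_const a)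
      simpa [Function.comp_def] using this
    have hc := (h1.neg.add h2).add (h3.div_const (8 * a ^ 3))
    refine hc.congr_deriv ?_
    have h1a : (1:ℝ) + (r / a) ^ 2 ≠ 0 := by positivity
    field_simp
    ring
  have hlim : Tendsto F atTop (nhds (π / (16 * a ^ 3))) := by
    have h := (((aux_tendsto2 a ha).div_const 4).neg.add
        ((aux_tendsto1 a ha).div_const (8 * a ^ 2))).add ((aux_arctan a ha).div_const (8 * a ^ 3))
    simp only [neg_zero, zero_add, add_zero, zero_div] at h
    have hv : π / 2 / (8 * a ^ 3) = π / (16 * a ^ 3) := by ring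
    rw [hv] at h
    refine h.congr (fun r => ?_)
    have hne := (aux_pos a r ha).ne'
    rw [hF]
    field_simp
    try ring
  have := integral_Ioi_of_hasDerivAt_of_nonneg' (a := 0) (fun x _ => key x)
      (fun x _ => by positivity) hlim
  rw [this, hF]
  simp [Real.arctan_zero]

lemma radial2 (a : ℝ) (ha : 0 < a) :
    ∫ r in Ioi (0:ℝ), r ^ 4 / (a ^ 2 + r ^ 2) ^ 3 = 3 * π / (16 * a) := by
  set F : ℝ → ℝ := fun r => a ^ 2 * r / (4 * (a ^ 2 + r ^ 2) ^ 2) - 5 * r / (8 * (a ^ 2 + r ^ 2))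
      + 3 * Real.arctan (r / a) / (8 * a) with hF
  have key : ∀ r : ℝ, HasDerivAt F (r ^ 4 / (a ^ 2 + r ^ 2) ^ 3) r := by
    intro r
    have hne := (aux_pos a r ha).ne'
    have h0 : HasDerivAt (fun r : ℝ => a ^ 2 + r ^ 2) (2 * r) r := by
      simpa using (hasDerivAt_pow 2 r).const_add (a ^ 2)
    have h1 : HasDerivAt (fun r : ℝ => a ^ 2 * r / (4 * (a ^ 2 + r ^ 2) ^ 2))
        ((a ^ 2 * (4 * (a ^ 2 + r ^ 2) ^ 2) - a ^ 2 * r * (4 * (2 * (a ^ 2 + r ^ 2) ^ 1 * (2 * r))))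
          / (4 * (a ^ 2 + r ^ 2) ^ 2) ^ 2) r := by
      have := ((hasDerivAt_id r).const_mul (a ^ 2)).div ((h0.pow 2).const_mul 4) (by exact mul_ne_zero (by norm_num) (pow_ne_zero _ hne))
      simpa [Pi.div_def] using this
    have h2 : HasDerivAt (fun r : ℝ => 5 * r / (8 * (a ^ 2 + r ^ 2)))
        ((5 * (8 * (a ^ 2 + r ^ 2)) - 5 * r * (8 * (2 * r)))
          / (8 * (a ^ 2 + r ^ 2)) ^ 2) r := by
      have := ((hasDerivAt_id r).const_mul (5:ℝ)).div (h0.const_mul 8) (by positivity)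
      simpa [Pi.div_def] using this
    have h3 : HasDerivAt (fun r : ℝ => Real.arctan (r / a))
        (1 / (1 + (r / a) ^ 2) * (1 / a)) r := by
      have := (Real.hasDerivAt_arctan (r / a)).comp r ((hasDerivAt_id r).div_const a)
      simpa [Function.comp_def] using this
    have hc := (h1.sub h2).add (((h3.const_mul (3:ℝ)).div_const (8 * a)))
    refine hc.congr_deriv ?_
    have h1a : (1:ℝ) + (r / a) ^ 2 ≠ 0 := by positivity
    field_simp
    ring
  have hlim : Tendsto F atTop (nhds (3 * π / (16 * a))) := by
    have h := (((aux_tendsto2 a ha).const_mul (a ^ 2 / 4)).sub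
        ((aux_tendsto1 a ha).const_mul (5 / 8))).add
        (((aux_arctan a ha).const_mul (3:ℝ)).div_const (8 * a))
    simp only [mul_zero, sub_zero, zero_add, zero_sub, neg_zero] at h
    have hv : 3 * (π / 2) / (8 * a) = 3 * π / (16 * a) := by ring
    rw [hv] at h
    refine h.congr (fun r => ?_)
    have hne := (aux_pos a r ha).ne'
    rw [hF]
    field_simp
    try ring
  have := integral_Ioi_of_hasDerivAt_of_nonneg' (a := 0) (fun x _ => key x)
      (fun x _ => by positivity) hlim
  rw [this, hF]
  simp [Real.arctan_zero]


/-- The Aubin–Talenti bubble `u_ε(x) = 3^{1/4} ε^{1/2} (ε² + |x|²)^{-1/2}` on `ℝ³`. -/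
noncomputable def bubble (ε : ℝ) : EuclideanSpace ℝ (Fin 3) → ℝ :=
  fun x => (3 : ℝ) ^ ((1 : ℝ) / 4) * ε ^ ((1 : ℝ) / 2) * (ε ^ 2 + ‖x‖ ^ 2) ^ (-(1 : ℝ) / 2)

section calc1
variable (ε : ℝ) (hε : 0 < ε)
local notation "E3" => EuclideanSpace ℝ (Fin 3)
local notation "cc" => (3 : ℝ) ^ ((1 : ℝ) / 4) * ε ^ ((1 : ℝ) / 2)

lemma bubble_hasFDerivAt (hε : 0 < ε) (x : E3) :
    HasFDerivAt (bubble ε)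
      ((-(cc * (ε ^ 2 + ‖x‖ ^ 2) ^ (-(3 : ℝ) / 2))) • (innerSL ℝ x)) x := by
  have ht : (0:ℝ) < ε ^ 2 + ‖x‖ ^ 2 := add_pos_of_pos_of_nonneg (pow_pos hε 2) (sq_nonneg _)
  have hg : HasFDerivAt (fun y : E3 => ε ^ 2 + ‖y‖ ^ 2)
      ((2 : ℕ) • (innerSL ℝ x : E3 →L[ℝ] ℝ)) x :=
    ((hasStrictFDerivAt_norm_sq x).hasFDerivAt).const_add (ε ^ 2)
  have hr := (hg.rpow_const (p := -(1:ℝ)/2) (Or.inl ht.ne')).const_mul cc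
  refine hr.congr_fderiv ?_
  ext y
  have h32 : (-(1:ℝ)/2 - 1) = -(3:ℝ)/2 := by norm_num
  simp only [ContinuousLinearMap.smul_apply, innerSL_apply_apply, smul_eq_mul, nsmul_eq_mul,
    Nat.cast_ofNat, h32]
  ring

lemma bubble_fderiv (hε : 0 < ε) (x : E3) :
    fderiv ℝ (bubble ε) x = (-(cc * (ε ^ 2 + ‖x‖ ^ 2) ^ (-(3 : ℝ) / 2))) • (innerSL ℝ x) :=
  (bubble_hasFDerivAt ε hε x).fderiv

lemma bubble_fderiv_apply (hε : 0 < ε) (i : Fin 3) :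
    (fun y : E3 => fderiv ℝ (bubble ε) y (EuclideanSpace.single i (1 : ℝ)))
      = fun y : E3 => (-(cc * (ε ^ 2 + ‖y‖ ^ 2) ^ (-(3 : ℝ) / 2))) * (y i) := by
  funext y
  rw [bubble_fderiv ε hε y]
  simp only [ContinuousLinearMap.smul_apply, innerSL_apply_apply, smul_eq_mul]
  rw [EuclideanSpace.inner_single_right]
  simp

lemma bubble_second (hε : 0 < ε) (i : Fin 3) (x : E3) :
    fderiv ℝ (fun y : E3 => fderiv ℝ (bubble ε) y (EuclideanSpace.single i (1 : ℝ))) x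
        (EuclideanSpace.single i (1 : ℝ))
      = -(cc * (ε ^ 2 + ‖x‖ ^ 2) ^ (-(3 : ℝ) / 2))
        + 3 * cc * (ε ^ 2 + ‖x‖ ^ 2) ^ (-(5 : ℝ) / 2) * (x i) ^ 2 := by
  have ht : (0:ℝ) < ε ^ 2 + ‖x‖ ^ 2 := add_pos_of_pos_of_nonneg (pow_pos hε 2) (sq_nonneg _)
  rw [bubble_fderiv_apply ε hε i]
  have hg : HasFDerivAt (fun y : E3 => ε ^ 2 + ‖y‖ ^ 2)
      ((2 : ℕ) • (innerSL ℝ x : E3 →L[ℝ] ℝ)) x :=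
    ((hasStrictFDerivAt_norm_sq x).hasFDerivAt).const_add (ε ^ 2)
  have hu : HasFDerivAt (fun y : E3 => -(cc * (ε ^ 2 + ‖y‖ ^ 2) ^ (-(3 : ℝ) / 2)))
      (-(cc • ((-(3:ℝ)/2 * (ε ^ 2 + ‖x‖ ^ 2) ^ (-(3:ℝ)/2 - 1)) •
        ((2 : ℕ) • (innerSL ℝ x : E3 →L[ℝ] ℝ))))) x :=
    ((hg.rpow_const (p := -(3:ℝ)/2) (Or.inl ht.ne')).const_mul cc).neg
  have hv : HasFDerivAt (fun y : E3 => y i)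
      (EuclideanSpace.proj i : E3 →L[ℝ] ℝ) x := by
    simpa using (EuclideanSpace.proj (𝕜 := ℝ) (i : Fin 3)).hasFDerivAt (x := x)
  have hm := hu.mul hv
  rw [show (fun y : E3 => -(cc * (ε ^ 2 + ‖y‖ ^ 2) ^ (-(3 : ℝ) / 2)) * y i)
    = (fun y : E3 => -(cc * (ε ^ 2 + ‖y‖ ^ 2) ^ (-(3 : ℝ) / 2))) * (fun y : E3 => y i) from rfl, hm.fderiv]
  have h52 : (-(3:ℝ)/2 - 1) = -(5:ℝ)/2 := by norm_num
  simp only [ContinuousLinearMap.add_apply, ContinuousLinearMap.smul_apply,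
    ContinuousLinearMap.neg_apply, innerSL_apply_apply, smul_eq_mul, nsmul_eq_mul,
    Nat.cast_ofNat, h52, PiLp.proj_apply]
  rw [EuclideanSpace.inner_single_right]
  simp only [EuclideanSpace.single_apply, if_pos rfl, map_one, one_mul,
    RCLike.star_def, starRingEnd_apply, star_trivial, if_true]
  ring


lemma bubble_pde (hε : 0 < ε) (x : E3) :
    -(∑ i : Fin 3,
        fderiv ℝ (fun y => fderiv ℝ (bubble ε) y (EuclideanSpace.single i (1 : ℝ))) x
          (EuclideanSpace.single i (1 : ℝ))) = (bubble ε x) ^ 5 := by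
  have ht : (0:ℝ) < ε ^ 2 + ‖x‖ ^ 2 := add_pos_of_pos_of_nonneg (pow_pos hε 2) (sq_nonneg _)
  have hsum : ∑ i : Fin 3, (x i) ^ 2 = (ε ^ 2 + ‖x‖ ^ 2) - ε ^ 2 := by
    have : ∑ i : Fin 3, (x i) ^ 2 = ‖x‖ ^ 2 := by
      rw [EuclideanSpace.norm_eq, Real.sq_sqrt (by positivity)]
      simp [Real.norm_eq_abs, sq_abs]
    rw [this]; ring
  have h3 : ((3:ℝ) ^ ((1:ℝ)/4)) ^ (5:ℕ) = 3 * 3 ^ ((1:ℝ)/4) := by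
    rw [← Real.rpow_natCast ((3:ℝ) ^ ((1:ℝ)/4)) 5, ← Real.rpow_mul (by norm_num)]
    rw [show ((1:ℝ)/4 * ((5:ℕ):ℝ) : ℝ) = 1 + 1/4 by push_cast; norm_num]
    rw [Real.rpow_add (by norm_num), Real.rpow_one]
  have he5 : (ε ^ ((1:ℝ)/2)) ^ (5:ℕ) = ε ^ 2 * ε ^ ((1:ℝ)/2) := by
    rw [← Real.rpow_natCast (ε ^ ((1:ℝ)/2)) 5, ← Real.rpow_mul hε.le]
    rw [show ((1:ℝ)/2 * ((5:ℕ):ℝ) : ℝ) = 2 + 1/2 by push_cast; norm_num]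
    rw [Real.rpow_add hε, show (2:ℝ) = ((2:ℕ):ℝ) by norm_num, Real.rpow_natCast]
  have h15 : ((ε ^ 2 + ‖x‖ ^ 2) ^ (-(1:ℝ)/2)) ^ (5:ℕ)
      = (ε ^ 2 + ‖x‖ ^ 2) ^ (-(5:ℝ)/2) := by
    rw [← Real.rpow_natCast ((ε ^ 2 + ‖x‖ ^ 2) ^ (-(1:ℝ)/2)) 5, ← Real.rpow_mul ht.le]
    norm_num
  have hm : (ε ^ 2 + ‖x‖ ^ 2) ^ (-(3:ℝ)/2)
      = (ε ^ 2 + ‖x‖ ^ 2) ^ (-(5:ℝ)/2) * (ε ^ 2 + ‖x‖ ^ 2) := by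
    nth_rewrite 3 [← Real.rpow_one (ε ^ 2 + ‖x‖ ^ 2)]
    rw [← Real.rpow_add ht]
    norm_num
  simp only [bubble_second ε hε]
  rw [Finset.sum_add_distrib, Finset.sum_const, Finset.card_univ, Fintype.card_fin,
    ← Finset.mul_sum, hsum]
  unfold bubble
  rw [mul_pow, mul_pow, h3, he5, h15, hm]
  push_cast
  ring


lemma bubble_contDiff (hε : 0 < ε) : ContDiff ℝ (⊤ : ℕ∞) (bubble ε) := by
  apply ContDiff.mul contDiff_const
  apply ContDiff.rpow_const_of_ne (contDiff_const.add (contDiff_norm_sq ℝ))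
  intro x
  exact (add_pos_of_pos_of_nonneg (pow_pos hε 2) (sq_nonneg _)).ne'

lemma bubble_pos (hε : 0 < ε) (x : E3) : 0 < bubble ε x := by
  have ht : (0:ℝ) < ε ^ 2 + ‖x‖ ^ 2 := add_pos_of_pos_of_nonneg (pow_pos hε 2) (sq_nonneg _)
  exact mul_pos (mul_pos (Real.rpow_pos_of_pos (by norm_num) _)
    (Real.rpow_pos_of_pos hε _)) (Real.rpow_pos_of_pos ht _)

lemma ball_vol : (volume (Metric.ball (0 : E3) 1)).toReal = 4 * π / 3 := by
  rw [EuclideanSpace.volume_ball]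
  have hg : Real.Gamma (((3:ℕ):ℝ)/2 + 1) = 3/4 * Real.sqrt π := by
    rw [show (((3:ℕ):ℝ))/2 + 1 = 3/2 + 1 by norm_num]
    rw [Real.Gamma_add_one (by norm_num)]
    rw [show (3:ℝ)/2 = 1/2 + 1 by norm_num, Real.Gamma_add_one (by norm_num),
      Real.Gamma_one_half_eq]
    ring
  have hs : Real.sqrt π ≠ 0 := by
    have := Real.sqrt_pos.mpr Real.pi_pos
    exact this.ne'
  rw [Fintype.card_fin, hg]
  have harg : Real.sqrt π ^ 3 / (3/4 * Real.sqrt π) = 4 * π / 3 := by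
    rw [pow_succ, Real.sq_sqrt Real.pi_pos.le]
    field_simp
  rw [harg, ENNReal.ofReal_one, one_pow, one_mul,
    ENNReal.toReal_ofReal (by positivity : (0:ℝ) ≤ 4 * π / 3)]

lemma bubble_sq_pow (t : ℝ) (ht : 0 < t) :
    (t ^ (-(1:ℝ)/2)) ^ (6:ℕ) = (t ^ 3)⁻¹ := by
  rw [← Real.rpow_natCast (t ^ (-(1:ℝ)/2)) 6, ← Real.rpow_mul ht.le]
  rw [show (-(1:ℝ)/2 * ((6:ℕ):ℝ)) = -((3:ℕ):ℝ) by push_cast; norm_num]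
  rw [Real.rpow_neg ht.le, Real.rpow_natCast]

lemma bubble_sq_pow2 (t : ℝ) (ht : 0 < t) :
    (t ^ (-(3:ℝ)/2)) ^ (2:ℕ) = (t ^ 3)⁻¹ := by
  rw [← Real.rpow_natCast (t ^ (-(3:ℝ)/2)) 2, ← Real.rpow_mul ht.le]
  rw [show (-(3:ℝ)/2 * ((2:ℕ):ℝ)) = -((3:ℕ):ℝ) by push_cast; norm_num]
  rw [Real.rpow_neg ht.le, Real.rpow_natCast]

lemma cc_pow6 (hε : 0 < ε) : cc ^ (6:ℕ) = 3 ^ ((3:ℝ)/2) * ε ^ 3 := by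
  rw [mul_pow]
  rw [← Real.rpow_natCast ((3:ℝ) ^ ((1:ℝ)/4)) 6, ← Real.rpow_mul (by norm_num)]
  rw [← Real.rpow_natCast (ε ^ ((1:ℝ)/2)) 6, ← Real.rpow_mul hε.le]
  rw [show ((1:ℝ)/4 * ((6:ℕ):ℝ)) = (3:ℝ)/2 by push_cast; norm_num]
  rw [show ((1:ℝ)/2 * ((6:ℕ):ℝ)) = ((3:ℕ):ℝ) by push_cast; norm_num]
  rw [Real.rpow_natCast]

lemma cc_sq (hε : 0 < ε) : cc ^ (2:ℕ) * 3 = 3 ^ ((3:ℝ)/2) * ε := by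
  rw [mul_pow]
  rw [← Real.rpow_natCast ((3:ℝ) ^ ((1:ℝ)/4)) 2, ← Real.rpow_mul (by norm_num)]
  rw [← Real.rpow_natCast (ε ^ ((1:ℝ)/2)) 2, ← Real.rpow_mul hε.le]
  rw [show ((1:ℝ)/4 * ((2:ℕ):ℝ)) = (1:ℝ)/2 by push_cast; norm_num]
  rw [show ((1:ℝ)/2 * ((2:ℕ):ℝ)) = (1:ℝ) by push_cast; norm_num]
  rw [Real.rpow_one]
  rw [show (3:ℝ)/2 = 1/2 + 1 by norm_num, Real.rpow_add (by norm_num : (0:ℝ) < 3),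
    Real.rpow_one]
  ring


lemma bubble_int6 (hε : 0 < ε) :
    (∫ x : E3, (bubble ε x) ^ 6) = 3 ^ ((3:ℝ)/2) * π ^ 2 / 4 := by
  set f : ℝ → ℝ := fun r => cc ^ 6 * ((ε ^ 2 + r ^ 2) ^ 3)⁻¹ with hf
  have hpt : ∀ x : E3, (bubble ε x) ^ 6 = f ‖x‖ := by
    intro x
    have ht : (0:ℝ) < ε ^ 2 + ‖x‖ ^ 2 := add_pos_of_pos_of_nonneg (pow_pos hε 2) (sq_nonneg _)
    rw [hf]
    show (bubble ε x) ^ 6 = cc ^ 6 * ((ε ^ 2 + ‖x‖ ^ 2) ^ 3)⁻¹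
    unfold bubble
    rw [mul_pow, bubble_sq_pow _ ht]
  simp only [hpt]
  rw [integral_fun_norm_addHaar (volume : Measure E3) f]
  rw [finrank_euclideanSpace_fin, measureReal_def, ball_vol]
  have heq : ∀ y : ℝ, y ^ (3-1) • f y = cc ^ 6 * (y ^ 2 / (ε ^ 2 + y ^ 2) ^ 3) := by
    intro y
    rw [hf]
    show y ^ 2 * (cc ^ 6 * ((ε ^ 2 + y ^ 2) ^ 3)⁻¹) = _
    ring
  simp only [heq]
  rw [integral_const_mul, radial1 ε hε, cc_pow6 ε hε]
  simp only [nsmul_eq_mul, smul_eq_mul, Nat.cast_ofNat]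
  have h16 : (16:ℝ) * ε ^ 3 ≠ 0 := by positivity
  field_simp
  ring

lemma bubble_int_grad (hε : 0 < ε) :
    (∫ x : E3, ‖fderiv ℝ (bubble ε) x‖ ^ 2) = 3 ^ ((3:ℝ)/2) * π ^ 2 / 4 := by
  set f : ℝ → ℝ := fun r => cc ^ 2 * (r ^ 2 * ((ε ^ 2 + r ^ 2) ^ 3)⁻¹) with hf
  have hpt : ∀ x : E3, ‖fderiv ℝ (bubble ε) x‖ ^ 2 = f ‖x‖ := by
    intro x
    have ht : (0:ℝ) < ε ^ 2 + ‖x‖ ^ 2 := add_pos_of_pos_of_nonneg (pow_pos hε 2) (sq_nonneg _)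
    rw [bubble_fderiv ε hε x, norm_smul, innerSL_apply_norm, Real.norm_eq_abs, abs_neg,
      abs_of_pos (mul_pos (mul_pos (Real.rpow_pos_of_pos (by norm_num) _)
        (Real.rpow_pos_of_pos hε _)) (Real.rpow_pos_of_pos ht _))]
    rw [hf]
    show (cc * (ε ^ 2 + ‖x‖ ^ 2) ^ (-(3:ℝ)/2) * ‖x‖) ^ 2
        = cc ^ 2 * (‖x‖ ^ 2 * ((ε ^ 2 + ‖x‖ ^ 2) ^ 3)⁻¹)
    rw [mul_pow, mul_pow, bubble_sq_pow2 _ ht]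
    ring
  simp only [hpt]
  rw [integral_fun_norm_addHaar (volume : Measure E3) f]
  rw [finrank_euclideanSpace_fin, measureReal_def, ball_vol]
  have heq : ∀ y : ℝ, y ^ (3-1) • f y = cc ^ 2 * (y ^ 4 / (ε ^ 2 + y ^ 2) ^ 3) := by
    intro y
    rw [hf]
    show y ^ 2 * (cc ^ 2 * (y ^ 2 * ((ε ^ 2 + y ^ 2) ^ 3)⁻¹)) = _
    ring
  simp only [heq]
  rw [integral_const_mul, radial2 ε hε]
  simp only [nsmul_eq_mul, smul_eq_mul, Nat.cast_ofNat]
  have hkey := cc_sq ε hε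
  have h16 : (16:ℝ) * ε ≠ 0 := by positivity
  field_simp
  nlinarith [hkey, Real.pi_pos]

end calc1


theorem stmt14 (ε : ℝ) (hε : 0 < ε) :
    ContDiff ℝ (⊤ : ℕ∞) (bubble ε) ∧
    (∀ x : EuclideanSpace ℝ (Fin 3), 0 < bubble ε x) ∧
    -- `−Δu_ε = u_ε⁵` pointwise, the Laplacian being the sum of second partial derivatives
    (∀ x : EuclideanSpace ℝ (Fin 3),
      -(∑ i : Fin 3,
          fderiv ℝ (fun y => fderiv ℝ (bubble ε) y (EuclideanSpace.single i (1 : ℝ))) x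
            (EuclideanSpace.single i (1 : ℝ))) = (bubble ε x) ^ 5) ∧
    (∫ x : EuclideanSpace ℝ (Fin 3), ‖fderiv ℝ (bubble ε) x‖ ^ 2) =
      (3 : ℝ) ^ ((3 : ℝ) / 2) * Real.pi ^ 2 / 4 ∧
    (∫ x : EuclideanSpace ℝ (Fin 3), (bubble ε x) ^ 6) =
      (3 : ℝ) ^ ((3 : ℝ) / 2) * Real.pi ^ 2 / 4 :=
  ⟨bubble_contDiff ε hε, bubble_pos ε hε, bubble_pde ε hε,
    bubble_int_grad ε hε, bubble_int6 ε hε⟩
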